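/- Let O be a set of quantum channels from M_a(ℂ) to M_b(ℂ) and O' a set of quantum channels from M_c(ℂ) to M_c(ℂ). Let s ≥ 1 and let E : M_c(ℂ) → M_{a·s}(ℂ) and D : M_{b·s}(ℂ) → M_c(ℂ) be quantum channels, and define the superchannel Π(X) := D ∘ (X ⊠ id_s) ∘ E for channels X : M_a(ℂ) → M_b(ℂ). Suppose: (i) N = p·E_f + (1 − p)·M, where E_f ∈ O, M is a quantum channel from M_a(ℂ) to M_b(ℂ), and 0 < p ≤ 1 (so N has a free component); (ii) Π(E_f) ∈ O'; and (iii) U is a c×c unitary matrix whose unitary channel Ad_U(X) := U X U† satisfies Ad_U ∉ O'. Then Π(N) ≠ Ad_U. (Theorem S1: no free superchannel can transform a channel with a free component into a unitary resource channel.) -/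

import Mathlib

open scoped Matrix ComplexOrder

noncomputable section

/-- A density matrix: a positive semidefinite complex matrix with unit trace. -/
def IsDensity {n : Type*} [Fintype n] (A : Matrix n n ℂ) : Prop :=
  A.PosSemidef ∧ A.trace = 1

/-- A positive map: it sends positive semidefinite matrices to positive semidefinite matrices. -/
def PosMap {n m : Type*} [Fintype n] [Fintype m]
    (Φ : Matrix n n ℂ →ₗ[ℂ] Matrix m m ℂ) : Prop :=
  ∀ X, X.PosSemidef → (Φ X).PosSemidef

/-- A trace-preserving map. -/
def TracePreserving {n m : Type*} [Fintype n] [Fintype m]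
    (Φ : Matrix n n ℂ →ₗ[ℂ] Matrix m m ℂ) : Prop :=
  ∀ X, (Φ X).trace = X.trace

/-- The optimal hypothesis-testing error
`β_ε(ρ‖σ) = inf { Tr(M σ) : 0 ≤ M ≤ I, Tr(ρ M) ≥ 1 - ε }`. -/
noncomputable def betaErr {n : Type*} [Fintype n] [DecidableEq n] (ε : ℝ)
    (ρ σ : Matrix n n ℂ) : ℝ :=
  sInf {x : ℝ | ∃ M : Matrix n n ℂ, M.PosSemidef ∧ (1 - M).PosSemidef ∧
    1 - ε ≤ ((ρ * M).trace).re ∧ x = ((σ * M).trace).re}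

/-- The hypothesis testing relative entropy `D_H^ε(ρ‖σ) = -log β_ε(ρ‖σ)`. -/
noncomputable def DH {n : Type*} [Fintype n] [DecidableEq n] (ε : ℝ)
    (ρ σ : Matrix n n ℂ) : ℝ :=
  - Real.log (betaErr ε ρ σ)

/-- `id_r ⊞ Φ`: the unique linear extension of `Y ⊗ X ↦ Y ⊗ Φ(X)`, realized blockwise on
the product index type. -/
noncomputable def idTensor {ι κ : Type*} [Fintype ι] [Fintype κ] (r : ℕ)
    (Φ : Matrix ι ι ℂ →ₗ[ℂ] Matrix κ κ ℂ) :
    Matrix (Fin r × ι) (Fin r × ι) ℂ →ₗ[ℂ] Matrix (Fin r × κ) (Fin r × κ) ℂ where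
  toFun Z := Matrix.of fun x y => Φ (Matrix.of fun k l => Z (x.1, k) (y.1, l)) x.2 y.2
  map_add' Z W := by
    ext x y
    have h : (Matrix.of fun k l => Z (x.1, k) (y.1, l) + W (x.1, k) (y.1, l)) =
        (Matrix.of fun k l => Z (x.1, k) (y.1, l)) +
          (Matrix.of fun k l => W (x.1, k) (y.1, l)) := by
      ext k l; rfl
    simp only [Matrix.of_apply, Matrix.add_apply]
    rw [h, map_add]
    rfl
  map_smul' c Z := by
    ext x y
    have h : (Matrix.of fun k l => c • Z (x.1, k) (y.1, l)) =
        c • (Matrix.of fun k l => Z (x.1, k) (y.1, l)) := by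
      ext k l; rfl
    simp only [Matrix.of_apply, Matrix.smul_apply, RingHom.id_apply]
    rw [h, map_smul]
    rfl

/-- `Φ ⊞ id_s`: the unique linear extension of `X ⊗ Y ↦ Φ(X) ⊗ Y`, realized blockwise on
the product index type. -/
noncomputable def tensorId {ι κ : Type*} [Fintype ι] [Fintype κ]
    (Φ : Matrix ι ι ℂ →ₗ[ℂ] Matrix κ κ ℂ) (s : ℕ) :
    Matrix (ι × Fin s) (ι × Fin s) ℂ →ₗ[ℂ] Matrix (κ × Fin s) (κ × Fin s) ℂ where
  toFun Z := Matrix.of fun x y => Φ (Matrix.of fun k l => Z (k, x.2) (l, y.2)) x.1 y.1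
  map_add' Z W := by
    ext x y
    have h : (Matrix.of fun k l => Z (k, x.2) (l, y.2) + W (k, x.2) (l, y.2)) =
        (Matrix.of fun k l => Z (k, x.2) (l, y.2)) +
          (Matrix.of fun k l => W (k, x.2) (l, y.2)) := by
      ext k l; rfl
    simp only [Matrix.of_apply, Matrix.add_apply]
    rw [h, map_add]
    rfl
  map_smul' c Z := by
    ext x y
    have h : (Matrix.of fun k l => c • Z (k, x.2) (l, y.2)) =
        c • (Matrix.of fun k l => Z (k, x.2) (l, y.2)) := by
      ext k l; rfl
    simp only [Matrix.of_apply, Matrix.smul_apply, RingHom.id_apply]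
    rw [h, map_smul]
    rfl

/-- Complete positivity: `id_r ⊞ Φ` is positive for every `r`. -/
def CompletelyPos {ι κ : Type*} [Fintype ι] [Fintype κ]
    (Φ : Matrix ι ι ℂ →ₗ[ℂ] Matrix κ κ ℂ) : Prop :=
  ∀ (r : ℕ) (Z : Matrix (Fin r × ι) (Fin r × ι) ℂ), Z.PosSemidef →
    (idTensor r Φ Z).PosSemidef

/-- A quantum channel: a completely positive trace-preserving linear map. -/
def IsChannel {ι κ : Type*} [Fintype ι] [Fintype κ]
    (Φ : Matrix ι ι ℂ →ₗ[ℂ] Matrix κ κ ℂ) : Prop :=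
  CompletelyPos Φ ∧ TracePreserving Φ

/-- The unitary channel `Ad_U : X ↦ U X U†`. -/
noncomputable def adU {c : ℕ} (U : Matrix (Fin c) (Fin c) ℂ) :
    Matrix (Fin c) (Fin c) ℂ →ₗ[ℂ] Matrix (Fin c) (Fin c) ℂ where
  toFun X := U * X * Uᴴ
  map_add' X Y := by
    show U * (X + Y) * Uᴴ = U * X * Uᴴ + U * Y * Uᴴ
    rw [Matrix.mul_add, Matrix.add_mul]
  map_smul' r X := by
    show U * (r • X) * Uᴴ = r • (U * X * Uᴴ)
    rw [Matrix.mul_smul, Matrix.smul_mul]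

/-!
The superchannel `Π(X) = D ∘ (X ⊠ id_s) ∘ E` is affine in `X`, so `Π(N) = p Π(E_f) + (1 - p) Π(M)`
is a proper mixture of two positive trace-preserving maps. `Ad_U` sends every pure state `v v⋆`
to the pure state `w w⋆`, `w = U v`, and a positive matrix `A` with `p A ≤ w w⋆` is a multiple of
`w w⋆`; comparing traces forces `Π(E_f)(v v⋆) = Ad_U(v v⋆)`. The matrices `v v⋆` span all
matrices (polarization), so `Π(E_f) = Ad_U`, contradicting `Π(E_f) ∈ O'` and `Ad_U ∉ O'`.
-/

open Matrix

-- `Φ X` and `tensorId Φ s Z` are, definitionally, reindexings of `idTensor r Φ` applied to a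
-- reindexed input.
lemma CompletelyPos.posMap {ι κ : Type*} [Fintype ι] [Fintype κ]
    {Φ : Matrix ι ι ℂ →ₗ[ℂ] Matrix κ κ ℂ} (hΦ : CompletelyPos Φ) : PosMap Φ := fun _ hX =>
  (hΦ 1 _ (hX.submatrix (Prod.snd : Fin 1 × ι → ι))).submatrix (fun k : κ => ((0 : Fin 1), k))

lemma CompletelyPos.posMap_tensorId {ι κ : Type*} [Fintype ι] [Fintype κ]
    {Φ : Matrix ι ι ℂ →ₗ[ℂ] Matrix κ κ ℂ} (hΦ : CompletelyPos Φ) (s : ℕ) :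
    PosMap (tensorId Φ s) := fun _ hZ =>
  (hΦ s _ (hZ.submatrix (Prod.swap : Fin s × ι → ι × Fin s))).submatrix
    (Prod.swap : κ × Fin s → Fin s × κ)

lemma TracePreserving.tensorId {ι κ : Type*} [Fintype ι] [Fintype κ]
    {Φ : Matrix ι ι ℂ →ₗ[ℂ] Matrix κ κ ℂ} (hΦ : TracePreserving Φ) (s : ℕ) :
    TracePreserving (tensorId Φ s) := by
  intro Z
  change ∑ x : κ × Fin s, Φ (of fun k l => Z (k, x.2) (l, x.2)) x.1 x.1 = ∑ x : ι × Fin s, Z x x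
  rw [Fintype.sum_prod_type_right, Fintype.sum_prod_type_right]
  exact Finset.sum_congr rfl fun j _ => hΦ (of fun k l => Z (k, j) (l, j))

lemma PosMap.comp {ι κ μ : Type*} [Fintype ι] [Fintype κ] [Fintype μ]
    {Φ : Matrix κ κ ℂ →ₗ[ℂ] Matrix μ μ ℂ} {Ψ : Matrix ι ι ℂ →ₗ[ℂ] Matrix κ κ ℂ}
    (hΦ : PosMap Φ) (hΨ : PosMap Ψ) : PosMap (Φ ∘ₗ Ψ) :=
  fun X hX => hΦ _ (hΨ X hX)

lemma TracePreserving.comp {ι κ μ : Type*} [Fintype ι] [Fintype κ] [Fintype μ]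
    {Φ : Matrix κ κ ℂ →ₗ[ℂ] Matrix μ μ ℂ} {Ψ : Matrix ι ι ℂ →ₗ[ℂ] Matrix κ κ ℂ}
    (hΦ : TracePreserving Φ) (hΨ : TracePreserving Ψ) : TracePreserving (Φ ∘ₗ Ψ) :=
  fun X => (hΦ _).trans (hΨ X)

lemma tensorId_smul_add_smul {ι κ : Type*} [Fintype ι] [Fintype κ]
    (Φ Ψ : Matrix ι ι ℂ →ₗ[ℂ] Matrix κ κ ℂ) (α β : ℂ) (s : ℕ) :
    tensorId (α • Φ + β • Ψ) s = α • tensorId Φ s + β • tensorId Ψ s := by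
  ext Z x y
  simp [tensorId]

lemma vecMulVec_polarization {n : Type*} (u z : n → ℂ) :
    (4 : ℂ) • vecMulVec u (star z) =
      vecMulVec (u + z) (star (u + z)) - vecMulVec (u - z) (star (u - z)) +
        Complex.I • (vecMulVec (u + Complex.I • z) (star (u + Complex.I • z)) -
          vecMulVec (u - Complex.I • z) (star (u - Complex.I • z))) := by
  ext i j
  simp only [Matrix.smul_apply, Matrix.add_apply, Matrix.sub_apply, vecMulVec_apply,
    Pi.add_apply, Pi.sub_apply, Pi.star_apply, Pi.smul_apply, star_add, star_sub, smul_eq_mul,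
    star_mul', Complex.star_def, Complex.conj_I]
  linear_combination
    (2 * u i * (starRingEnd ℂ) (z j) - 2 * z i * (starRingEnd ℂ) (u j)) * Complex.I_sq

lemma LinearMap.ext_vecMulVec_star {n m : Type*} [Fintype n] [DecidableEq n]
    {F G : Matrix n n ℂ →ₗ[ℂ] Matrix m m ℂ}
    (h : ∀ v : n → ℂ, F (vecMulVec v (star v)) = G (vecMulVec v (star v))) : F = G := by
  have hrankOne : ∀ u z : n → ℂ, F (vecMulVec u (star z)) = G (vecMulVec u (star z)) := by
    intro u z
    refine smul_right_injective _ (four_ne_zero' ℂ) ?_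
    change (4 : ℂ) • F _ = (4 : ℂ) • G _
    rw [← map_smul, ← map_smul, vecMulVec_polarization]
    simp only [map_add, map_sub, map_smul, h]
  ext1 X
  induction X using Matrix.induction_on' with
  | h_zero => simp
  | h_add X Y hX hY => rw [map_add, map_add, hX, hY]
  | h_std_basis i j x =>
    have : Matrix.single i j x = vecMulVec (Pi.single i x) (star (Pi.single j 1)) := by
      ext a b
      simp only [Matrix.single, of_apply, vecMulVec_apply, Pi.single_apply, Pi.star_apply,
        apply_ite star, star_one, star_zero]
      grind
    rw [this, hrankOne]

lemma Matrix.PosSemidef.exists_eq_smul_vecMulVec {n : Type*} [Fintype n] {A : Matrix n n ℂ}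
    (hA : A.PosSemidef) {w : n → ℂ} (hle : (vecMulVec w (star w) - A).PosSemidef) :
    ∃ c : ℂ, A = c • vecMulVec w (star w) := by
  set P := vecMulVec w (star w) with hP
  have hker : ∀ y, star w ⬝ᵥ y = 0 → A *ᵥ y = 0 := by
    intro y hy
    have hPy : star y ⬝ᵥ P *ᵥ y = 0 := by simp [hP, vecMulVec_mulVec, hy]
    have hAy := hle.dotProduct_mulVec_nonneg y
    rw [sub_mulVec, dotProduct_sub, hPy, zero_sub, neg_nonneg] at hAy
    exact (hA.dotProduct_mulVec_zero_iff y).mp (le_antisymm hAy (hA.dotProduct_mulVec_nonneg y))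
  by_cases hw : w = 0
  · refine ⟨0, ext_iff_mulVec.mpr fun y => ?_⟩
    simp [hker y (by simp [hw])]
  set t := star w ⬝ᵥ w
  have ht : t ≠ 0 := mt dotProduct_star_self_eq_zero.mp hw
  -- `t • x - (w⋆x) • w` is orthogonal to `w`, so `A` kills it.
  have hAP : A * P = t • A := by
    refine ext_iff_mulVec.mpr fun x => ?_
    have hx := hker (t • x - (star w ⬝ᵥ x) • w) (by
      simp only [dotProduct_sub, dotProduct_smul, smul_eq_mul, t]
      ring)
    rw [mulVec_sub, mulVec_smul, mulVec_smul, sub_eq_zero] at hx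
    rw [← mulVec_mulVec, hP, vecMulVec_mulVec, smul_mulVec, op_smul_eq_smul, mulVec_smul, hx]
  have hPA : P * A = star t • A := by
    simpa [conjTranspose_mul, hA.1.eq, conjTranspose_vecMulVec, hP] using
      congrArg (·ᴴ) hAP
  have hPAP : P * A * P = (star w ⬝ᵥ A *ᵥ w) • P := by
    rw [hP, vecMulVec_mul, vecMulVec_mul_vecMulVec, vecMulVec_smul, dotProduct_mulVec]
  refine ⟨(t * star t)⁻¹ * (star w ⬝ᵥ A *ᵥ w), ?_⟩
  have hscaled : (t * star t) • A = (star w ⬝ᵥ A *ᵥ w) • P := by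
    calc (t * star t) • A = t • (P * A) := by rw [hPA, smul_smul]
      _ = P * A * P := by rw [Matrix.mul_assoc, hAP, Matrix.mul_smul]
      _ = _ := hPAP
  rw [mul_smul, ← hscaled, smul_smul, inv_mul_cancel₀ (mul_ne_zero ht (star_ne_zero.mpr ht)),
    one_smul]

lemma eq_vecMulVec_of_smul_add_smul_eq {n : Type*} [Fintype n] {A B : Matrix n n ℂ}
    (hA : A.PosSemidef) (hB : B.PosSemidef) (htr : A.trace = B.trace) {p : ℝ} (hp0 : 0 < p)
    (hp1 : p ≤ 1) {w : n → ℂ} (h : (p : ℂ) • A + ((1 - p : ℝ) : ℂ) • B = vecMulVec w (star w)) :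
    A = vecMulVec w (star w) := by
  set P := vecMulVec w (star w)
  have hp : (p : ℂ) ≠ 0 := Complex.ofReal_ne_zero.mpr hp0.ne'
  have hle : (P - (p : ℂ) • A).PosSemidef := by
    rw [← h, add_sub_cancel_left]
    exact hB.smul (Complex.zero_le_real.mpr (sub_nonneg.mpr hp1))
  obtain ⟨c, hc⟩ := (hA.smul (Complex.zero_le_real.mpr hp0.le)).exists_eq_smul_vecMulVec hle
  have htrP : P.trace = A.trace := by
    rw [← h, trace_add, trace_smul, trace_smul, ← htr, smul_eq_mul, smul_eq_mul]
    push_cast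
    ring
  by_cases hA0 : A.trace = 0
  · rw [hA.trace_eq_zero_iff.mp hA0, eq_comm,
      ← (posSemidef_vecMulVec_self_star w).trace_eq_zero_iff, htrP, hA0]
  have hcp : c = p := by
    have := congrArg trace hc
    rw [trace_smul, trace_smul, htrP, smul_eq_mul, smul_eq_mul] at this
    exact (mul_right_cancel₀ hA0 this).symm
  rw [hcp] at hc
  exact smul_right_injective _ hp hc

lemma adU_vecMulVec {c : ℕ} (U : Matrix (Fin c) (Fin c) ℂ) (v : Fin c → ℂ) :
    adU U (vecMulVec v (star v)) = vecMulVec (U *ᵥ v) (star (U *ᵥ v)) := by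
  change U * vecMulVec v (star v) * Uᴴ = _
  rw [mul_vecMulVec, vecMulVec_mul, star_mulVec]

lemma eq_adU_of_smul_add_smul_eq_adU {c : ℕ}
    {Φ Ψ : Matrix (Fin c) (Fin c) ℂ →ₗ[ℂ] Matrix (Fin c) (Fin c) ℂ}
    (hΦ : PosMap Φ) (hΦtp : TracePreserving Φ) (hΨ : PosMap Ψ) (hΨtp : TracePreserving Ψ)
    {p : ℝ} (hp0 : 0 < p) (hp1 : p ≤ 1) {U : Matrix (Fin c) (Fin c) ℂ}
    (h : (p : ℂ) • Φ + ((1 - p : ℝ) : ℂ) • Ψ = adU U) : Φ = adU U := by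
  refine LinearMap.ext_vecMulVec_star fun v => ?_
  have hψ := posSemidef_vecMulVec_self_star v
  rw [adU_vecMulVec]
  refine eq_vecMulVec_of_smul_add_smul_eq (hΦ _ hψ) (hΨ _ hψ) ((hΦtp _).trans (hΨtp _).symm)
    hp0 hp1 ?_
  rw [← adU_vecMulVec, ← h]
  rfl

theorem no_go_channel_purification_general {a b c s : ℕ}
    (O : Set (Matrix (Fin a) (Fin a) ℂ →ₗ[ℂ] Matrix (Fin b) (Fin b) ℂ))
    (hO : ∀ Φ ∈ O, IsChannel Φ)
    (O' : Set (Matrix (Fin c) (Fin c) ℂ →ₗ[ℂ] Matrix (Fin c) (Fin c) ℂ))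
    (E : Matrix (Fin c) (Fin c) ℂ →ₗ[ℂ] Matrix (Fin a × Fin s) (Fin a × Fin s) ℂ)
    (hE : IsChannel E)
    (D : Matrix (Fin b × Fin s) (Fin b × Fin s) ℂ →ₗ[ℂ] Matrix (Fin c) (Fin c) ℂ)
    (hD : IsChannel D)
    (N Ef M : Matrix (Fin a) (Fin a) ℂ →ₗ[ℂ] Matrix (Fin b) (Fin b) ℂ)
    (hEfO : Ef ∈ O) (hMch : IsChannel M)
    (p : ℝ) (hp0 : 0 < p) (hp1 : p ≤ 1)
    (hdecomp : N = (p : ℂ) • Ef + ((1 - p : ℝ) : ℂ) • M)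
    (hPiEf : (D ∘ₗ tensorId Ef s ∘ₗ E) ∈ O')
    (U : Matrix (Fin c) (Fin c) ℂ)
    (hUres : adU U ∉ O') :
    (D ∘ₗ tensorId N s ∘ₗ E) ≠ adU U := by
  intro h
  have hPos : ∀ Φ, IsChannel Φ → PosMap (D ∘ₗ tensorId Φ s ∘ₗ E) := fun Φ hΦ =>
    hD.1.posMap.comp ((hΦ.1.posMap_tensorId s).comp hE.1.posMap)
  have hTP : ∀ Φ, IsChannel Φ → TracePreserving (D ∘ₗ tensorId Φ s ∘ₗ E) := fun Φ hΦ =>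
    hD.2.comp ((hΦ.2.tensorId s).comp hE.2)
  have hEf := hO Ef hEfO
  have hmix : (p : ℂ) • (D ∘ₗ tensorId Ef s ∘ₗ E) + ((1 - p : ℝ) : ℂ) • (D ∘ₗ tensorId M s ∘ₗ E)
      = adU U := by
    rw [← h, hdecomp, tensorId_smul_add_smul]
    ext X : 1
    simp
  refine hUres ?_
  rwa [← eq_adU_of_smul_add_smul_eq_adU (hPos Ef hEf) (hTP Ef hEf) (hPos M hMch) (hTP M hMch)
    hp0 hp1 hmix]

/-- **Theorem S1.**  No free superchannel `Π(X) = D ∘ (X ⊞ id_s) ∘ E` can transform a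
channel with a free component into a unitary resource channel. -/
theorem no_go_channel_purification {a b c s : ℕ} (hs : 1 ≤ s)
    (O : Set (Matrix (Fin a) (Fin a) ℂ →ₗ[ℂ] Matrix (Fin b) (Fin b) ℂ))
    (hO : ∀ Φ ∈ O, IsChannel Φ)
    (O' : Set (Matrix (Fin c) (Fin c) ℂ →ₗ[ℂ] Matrix (Fin c) (Fin c) ℂ))
    (hO' : ∀ Φ ∈ O', IsChannel Φ)
    (E : Matrix (Fin c) (Fin c) ℂ →ₗ[ℂ] Matrix (Fin a × Fin s) (Fin a × Fin s) ℂ)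
    (hE : IsChannel E)
    (D : Matrix (Fin b × Fin s) (Fin b × Fin s) ℂ →ₗ[ℂ] Matrix (Fin c) (Fin c) ℂ)
    (hD : IsChannel D)
    (N Ef M : Matrix (Fin a) (Fin a) ℂ →ₗ[ℂ] Matrix (Fin b) (Fin b) ℂ)
    (hEfO : Ef ∈ O) (hMch : IsChannel M)
    (p : ℝ) (hp0 : 0 < p) (hp1 : p ≤ 1)
    (hdecomp : N = (p : ℂ) • Ef + ((1 - p : ℝ) : ℂ) • M)
    (hPiEf : (D ∘ₗ tensorId Ef s ∘ₗ E) ∈ O')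
    (U : Matrix (Fin c) (Fin c) ℂ) (hU : U * Uᴴ = 1 ∧ Uᴴ * U = 1)
    (hUres : adU U ∉ O') :
    (D ∘ₗ tensorId N s ∘ₗ E) ≠ adU U :=
  no_go_channel_purification_general O hO O' E hE D hD N Ef M hEfO hMch p hp0 hp1 hdecomp hPiEf U
    hUres
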